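/- arXiv:2604.21423 — 2 statements merged into one kernel-verified Lean document; each statement's English description precedes it below -/
import Mathlib

section
/- Fix J ≥ 1, δ ∈ ℝ^J and p ∈ ℝ^J with all p_j > 0, and let Ψ_j(z; p) = exp(δ_j − z p_j)/(1 + Σ_{ℓ=1}^J exp(δ_ℓ − z p_ℓ)). Then for each k there is a constant C > 0 (depending on δ) such that for all z > 0, |∂_{p_k} Ψ_j(z; p)| ≤ C z e^{−z p_j} and |∂²_{p_j p_k} Ψ_j(z; p)| ≤ C z² e^{−z p_j}. -/
open MeasureTheory Real Filter

/-- Logit choice probability of product `j` at prices `p`, mean utilities `δ`,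
and price coefficient `α`. -/
noncomputable def logitShare {J : ℕ} (δ : Fin J → ℝ) (j : Fin J) (p : Fin J → ℝ) (α : ℝ) : ℝ :=
  Real.exp (δ j - α * p j) / (1 + ∑ l, Real.exp (δ l - α * p l))

/-- Rescaled logit kernel `Ψ_j(z; p)`. -/
noncomputable def Psi {J : ℕ} (δ : Fin J → ℝ) (j : Fin J) (z : ℝ) (p : Fin J → ℝ) : ℝ :=
  Real.exp (δ j - z * p j) / (1 + ∑ l, Real.exp (δ l - z * p l))

/-- Mixed-logit demand for product `j` with `Gamma(r, β)` mixing over the price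
coefficient, market size `M`. -/
noncomputable def qG {J : ℕ} (δ : Fin J → ℝ) (M r β : ℝ) (j : Fin J) (p : Fin J → ℝ) : ℝ :=
  M * ∫ α in Set.Ioi (0 : ℝ),
    logitShare δ j p α * (β ^ r / Real.Gamma r * α ^ (r - 1) * Real.exp (-β * α))

/-- Limit demand term `H_j(p) = ∫₀^∞ z^{r−1} Ψ_j(z; p) dz`. -/
noncomputable def Hfun {J : ℕ} (δ : Fin J → ℝ) (r : ℝ) (j : Fin J) (p : Fin J → ℝ) : ℝ :=
  ∫ z in Set.Ioi (0 : ℝ), z ^ (r - 1) * Psi δ j z p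

/-- Market-interaction correction `C_j(p)`. -/
noncomputable def Cfun {J : ℕ} (δ : Fin J → ℝ) (r : ℝ) (j : Fin J) (p : Fin J → ℝ) : ℝ :=
  (1 / Real.Gamma r) * ∫ u in Set.Ioi (0 : ℝ),
    u ^ (r - 1) * Real.exp (-u) / (1 + ∑ l, Real.exp (δ l - p l / p j * u))

/-- Partial derivative of `F : (Fin J → ℝ) → ℝ` in the `k`-th coordinate at `p`. -/
noncomputable def pd {J : ℕ} (F : (Fin J → ℝ) → ℝ) (k : Fin J) (p : Fin J → ℝ) : ℝ :=
  deriv (fun t => F (Function.update p k t)) (p k)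

/-!
The price derivatives of the logit kernel have the closed forms
`∂_{p_b} Ψ_a = z Ψ_a (Ψ_b - [a = b])` and
`∂_{p_c} ∂_{p_b} Ψ_a = z² Ψ_a ((Ψ_c - [a = c]) (Ψ_b - [a = b]) + Ψ_b (Ψ_c - [b = c]))`.
Since `0 ≤ Ψ ≤ 1`, every factor other than `z Ψ_a` is bounded by `1` in absolute value, and
`Ψ_a ≤ e^{δ_a} e^{-z p_a}` because the denominator is at least `1`.
-/

section PsiBounds

variable {J : ℕ} (δ : Fin J → ℝ)

lemma Psi_nonneg (a : Fin J) (z : ℝ) (p : Fin J → ℝ) : 0 ≤ Psi δ a z p := by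
  unfold Psi; positivity

lemma Psi_le_one (a : Fin J) (z : ℝ) (p : Fin J → ℝ) : Psi δ a z p ≤ 1 := by
  rw [Psi, div_le_one (by positivity)]
  have := Finset.single_le_sum (fun l _ => (exp_pos (δ l - z * p l)).le) (Finset.mem_univ a)
  linarith

lemma Psi_le_exp_mul_exp (a : Fin J) (z : ℝ) (p : Fin J → ℝ) :
    Psi δ a z p ≤ exp (δ a) * exp (-z * p a) := by
  calc Psi δ a z p ≤ exp (δ a - z * p a) :=
        div_le_self (exp_nonneg _)
          (le_add_of_nonneg_right (Finset.sum_nonneg fun l _ => exp_nonneg _))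
    _ = exp (δ a) * exp (-z * p a) := by rw [← exp_add]; ring_nf

lemma abs_sub_ite_le_one {x : ℝ} (hx₀ : 0 ≤ x) (hx₁ : x ≤ 1) (P : Prop) [Decidable P] :
    |x - if P then 1 else 0| ≤ 1 := by
  split_ifs <;> rw [abs_le] <;> constructor <;> linarith

end PsiBounds

section PsiDeriv

variable {J : ℕ} (δ : Fin J → ℝ) (z : ℝ)

lemma hasDerivAt_exp_sub_mul_update (a b : Fin J) (p : Fin J → ℝ) :
    HasDerivAt (fun t => exp (δ a - z * Function.update p b t a))
      (if a = b then -z * exp (δ a - z * p b) else 0) (p b) := by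
  by_cases h : a = b
  · subst h
    simp only [Function.update_self]
    simpa [mul_comm] using (((hasDerivAt_id (p a)).const_mul z).const_sub (δ a)).exp
  · simp only [Function.update_of_ne h, if_neg h]
    exact hasDerivAt_const _ _

lemma Psi_hasDerivAt (a b : Fin J) (p : Fin J → ℝ) :
    HasDerivAt (fun t => Psi δ a z (Function.update p b t))
      (z * Psi δ a z p * (Psi δ b z p - if a = b then 1 else 0)) (p b) := by
  have hden : HasDerivAt (fun t => 1 + ∑ l, exp (δ l - z * Function.update p b t l))
      (-z * exp (δ b - z * p b)) (p b) := by
    have := HasDerivAt.fun_sum fun l (_ : l ∈ Finset.univ) =>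
      hasDerivAt_exp_sub_mul_update δ z l b p
    simpa [Finset.sum_ite_eq'] using this.const_add 1
  have hden_ne : 1 + ∑ l, exp (δ l - z * Function.update p b (p b) l) ≠ 0 := by
    rw [Function.update_eq_self]; positivity
  have hquot := (hasDerivAt_exp_sub_mul_update δ z a b p).fun_div hden hden_ne
  simp only [Function.update_eq_self] at hquot
  refine hquot.congr_deriv ?_
  unfold Psi
  split_ifs with h
  · subst h; field_simp; ring
  · field_simp; ring

lemma pd_Psi (a b : Fin J) (p : Fin J → ℝ) :
    pd (Psi δ a z) b p = z * Psi δ a z p * (Psi δ b z p - if a = b then 1 else 0) :=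
  (Psi_hasDerivAt δ z a b p).deriv

lemma pd_pd_Psi (a b c : Fin J) (p : Fin J → ℝ) :
    pd (pd (Psi δ a z) b) c p = z ^ 2 * Psi δ a z p *
      ((Psi δ c z p - if a = c then 1 else 0) * (Psi δ b z p - if a = b then 1 else 0)
        + Psi δ b z p * (Psi δ c z p - if b = c then 1 else 0)) := by
  have hprod := ((Psi_hasDerivAt δ z a c p).const_mul z).fun_mul
    ((Psi_hasDerivAt δ z b c p).sub_const (if a = b then (1 : ℝ) else 0))
  simp only [Function.update_eq_self] at hprod
  have hinner : (fun t => pd (Psi δ a z) b (Function.update p c t)) = fun t =>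
      z * Psi δ a z (Function.update p c t) *
        (Psi δ b z (Function.update p c t) - if a = b then 1 else 0) :=
    funext fun t => pd_Psi δ z a b _
  rw [pd, hinner, hprod.deriv]
  ring

lemma abs_pd_Psi_le (a b : Fin J) (p : Fin J → ℝ) :
    |pd (Psi δ a z) b p| ≤ |z| * Psi δ a z p := by
  rw [pd_Psi, abs_mul, abs_mul, abs_of_nonneg (Psi_nonneg δ a z p)]
  exact mul_le_of_le_one_right (mul_nonneg (abs_nonneg z) (Psi_nonneg δ a z p))
    (abs_sub_ite_le_one (Psi_nonneg δ b z p) (Psi_le_one δ b z p) _)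

lemma abs_pd_pd_Psi_le (a b c : Fin J) (p : Fin J → ℝ) :
    |pd (pd (Psi δ a z) b) c p| ≤ 2 * z ^ 2 * Psi δ a z p := by
  have hΨa := Psi_nonneg δ a z p
  have hb := abs_sub_ite_le_one (Psi_nonneg δ b z p) (Psi_le_one δ b z p) (a = b)
  have hc := abs_sub_ite_le_one (Psi_nonneg δ c z p) (Psi_le_one δ c z p) (a = c)
  have hc' := abs_sub_ite_le_one (Psi_nonneg δ c z p) (Psi_le_one δ c z p) (b = c)
  have hΨb : |Psi δ b z p| ≤ 1 := by
    rw [abs_of_nonneg (Psi_nonneg δ b z p)]; exact Psi_le_one δ b z p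
  have hsum : |(Psi δ c z p - if a = c then 1 else 0) * (Psi δ b z p - if a = b then 1 else 0)
      + Psi δ b z p * (Psi δ c z p - if b = c then 1 else 0)| ≤ 2 := by
    refine (abs_add_le _ _).trans ?_
    rw [abs_mul, abs_mul]
    linarith [mul_le_one₀ hc (abs_nonneg _) hb, mul_le_one₀ hΨb (abs_nonneg _) hc']
  rw [pd_pd_Psi, abs_mul, abs_of_nonneg (by positivity : 0 ≤ z ^ 2 * Psi δ a z p)]
  exact (mul_le_mul_of_nonneg_left hsum (by positivity)).trans_eq (by ring)

end PsiDeriv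

theorem Psi_deriv_bounds_general {J : ℕ} (δ : Fin J → ℝ)
    (p : Fin J → ℝ) (j k : Fin J) :
    ∃ C > (0 : ℝ), ∀ z > (0 : ℝ),
      |pd (Psi δ j z) k p| ≤ C * z * Real.exp (-z * p j) ∧
      |pd (pd (Psi δ j z) k) j p| ≤ C * z ^ 2 * Real.exp (-z * p j) := by
  refine ⟨2 * exp (δ j), by positivity, fun z hz => ?_⟩
  have hΨ := Psi_le_exp_mul_exp δ j z p
  constructor
  · calc |pd (Psi δ j z) k p| ≤ z * Psi δ j z p := by
          simpa only [abs_of_pos hz] using abs_pd_Psi_le δ z j k p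
      _ ≤ z * (exp (δ j) * exp (-z * p j)) := by gcongr
      _ ≤ 2 * exp (δ j) * z * exp (-z * p j) := by
          nlinarith [mul_pos (mul_pos hz (exp_pos (δ j))) (exp_pos (-z * p j))]
  · calc |pd (pd (Psi δ j z) k) j p| ≤ 2 * z ^ 2 * Psi δ j z p := abs_pd_pd_Psi_le δ z j k j p
      _ ≤ 2 * z ^ 2 * (exp (δ j) * exp (-z * p j)) := by gcongr
      _ = 2 * exp (δ j) * z ^ 2 * exp (-z * p j) := by ring

/-- Derivative bounds for the rescaled logit kernel: there is `C > 0` (depending on `δ`)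
with `|∂_{p_k} Ψ_j(z;p)| ≤ C z e^{−z p_j}` and `|∂²_{p_j p_k} Ψ_j(z;p)| ≤ C z² e^{−z p_j}`
for all `z > 0`. -/
theorem Psi_deriv_bounds {J : ℕ} (hJ : 1 ≤ J) (δ : Fin J → ℝ)
    (p : Fin J → ℝ) (hp : ∀ i, 0 < p i) (j k : Fin J) :
    ∃ C > (0 : ℝ), ∀ z > (0 : ℝ),
      |pd (Psi δ j z) k p| ≤ C * z * Real.exp (-z * p j) ∧
      |pd (pd (Psi δ j z) k) j p| ≤ C * z ^ 2 * Real.exp (-z * p j) :=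
  Psi_deriv_bounds_general δ p j k
end

section
/- Let q_j be mixed-logit demand with Gamma(r, β) mixing (r > 0, β > 0, market size M > 0, mean utilities δ ∈ ℝ^J), and define κ_{jj}^j(p) = q_j(p) ∂²_{p_j p_j} q_j(p)/(∂_{p_j} q_j(p))², η_{jk}(p) = ∂_{p_k} q_j(p)/q_j(p), C_j(p) = (1/Γ(r)) ∫₀^∞ u^{r−1} e^{−u}/(1 + Σ_{ℓ=1}^J exp(δ_ℓ − (p_ℓ/p_j) u)) du, ζ_j(p) = −(p_j/r) ∂_{p_j} log C_j(p), χ_j(p) = (p_j²/r) ∂²_{p_j p_j} log C_j(p), and ξ_{jk}(p) = (p_j²/r) ∂²_{p_j p_k} log C_j(p) for k ≠ j. Then along any ray p ∈ ℝ_{++}^J, as λ → ∞: −2 + κ_{jj}^j(λ p) → −1 + (1/r)(1 + χ_j(p))/(1 + ζ_j(p))², and for each k ≠ j, ∂_{p_j} η_{jk}(λ p)/η_{jj}(λ p)² → (1/r) ξ_{jk}(p)/(1 + ζ_j(p))². -/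
open MeasureTheory Real Filter

open Set Function

/-!
Substituting `u = λα` in the mixing integral shows that demand at prices `λp` with Gamma rate `β`
equals demand at `p` with rate `β / λ`, and both statistics are unchanged by rescaling demand or
prices. So the ray limit is the limit `β → 0⁺` at fixed `p`. Every price derivative of demand that
enters is a Gamma-weighted integral `∫ u^{r-1} e^{-βu} K(u) du` of a kernel bounded by
`u^m Ψ_j(u) ≤ e^{δ_j} u^m e^{-p_j u}`, so dominated convergence lets `β → 0`. At `β = 0` the
integral is `H_j`, and `C_j = p_j^r e^{-δ_j} H_j / Γ(r)`; since `log C_j` and `log H_j` differ by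
`r log p_j`, the limiting values of the statistics of `H_j` are the stated expressions in
`ζ_j`, `χ_j`, `ξ_{jk}`.
-/

section PartialDerivative

variable {J : ℕ}

lemma pd_congr_of_eventuallyEq {F G : (Fin J → ℝ) → ℝ} {w : Fin J → ℝ} (h : F =ᶠ[nhds w] G)
    (k : Fin J) : pd F k w = pd G k w := by
  have hcont : Tendsto (fun t => update w k t) (nhds (w k)) (nhds w) :=
    (continuous_const.update k continuous_id).tendsto' _ _ (update_eq_self k w)
  exact Filter.EventuallyEq.deriv_eq (hcont.eventually h)

lemma pd_const_mul (a : ℝ) (F : (Fin J → ℝ) → ℝ) (k : Fin J) :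
    pd (fun q => a * F q) k = fun w => a * pd F k w := by
  funext w
  exact congrFun (deriv_const_mul_field' a) (w k)

lemma pd_comp_smul (c : ℝ) (F : (Fin J → ℝ) → ℝ) (k : Fin J) :
    pd (fun q => F (c • q)) k = fun w => c * pd F k (c • w) := by
  funext w
  have hupd : ∀ t, c • update w k t = update (c • w) k (c * t) := fun t => by
    rw [← smul_eq_mul, ← update_smul]
  simp only [pd, hupd]
  exact deriv_comp_mul_left (f := fun s => F (update (c • w) k s)) c (w k)

lemma eventually_apply_pos {j : Fin J} {w : Fin J → ℝ} (hw : 0 < w j) :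
    ∀ᶠ q in nhds w, 0 < q j :=
  ((continuous_apply j).tendsto w).eventually (eventually_gt_nhds hw)

end PartialDerivative

section DemandStatistics

variable {J : ℕ}

/-- `κ^j_{jj}` of the paper. -/
noncomputable def ownCurvature (F : (Fin J → ℝ) → ℝ) (j : Fin J) (w : Fin J → ℝ) : ℝ :=
  F w * pd (pd F j) j w / pd F j w ^ 2

/-- `∂_{p_j} η_{jk} / η_{jj}²` of the paper. -/
noncomputable def passThroughInteraction (F : (Fin J → ℝ) → ℝ) (j k : Fin J) (w : Fin J → ℝ) : ℝ :=
  pd (fun q => pd F k q / F q) j w / (pd F j w / F w) ^ 2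

variable {F : (Fin J → ℝ) → ℝ} {a : ℝ}

lemma ownCurvature_const_mul (ha : a ≠ 0) (j : Fin J) :
    ownCurvature (fun q => a * F q) j = ownCurvature F j := by
  funext w
  simp only [ownCurvature, pd_const_mul]
  rw [mul_pow, mul_mul_mul_comm, ← sq, mul_div_mul_left _ _ (pow_ne_zero 2 ha)]

lemma ownCurvature_comp_smul (ha : a ≠ 0) (j : Fin J) (w : Fin J → ℝ) :
    ownCurvature (fun q => F (a • q)) j w = ownCurvature F j (a • w) := by
  simp only [ownCurvature, pd_comp_smul, pd_const_mul]
  calc _ = a ^ 2 * (F (a • w) * pd (pd F j) j (a • w)) / (a ^ 2 * pd F j (a • w) ^ 2) := by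
        ring
    _ = _ := mul_div_mul_left _ _ (pow_ne_zero 2 ha)

lemma passThroughInteraction_const_mul (ha : a ≠ 0) (j k : Fin J) :
    passThroughInteraction (fun q => a * F q) j k = passThroughInteraction F j k := by
  funext w
  simp only [passThroughInteraction, pd_const_mul, mul_div_mul_left _ _ ha]

lemma passThroughInteraction_comp_smul (ha : a ≠ 0) (j k : Fin J) (w : Fin J → ℝ) :
    passThroughInteraction (fun q => F (a • q)) j k w = passThroughInteraction F j k (a • w) := by
  have hratio := congrFun (pd_comp_smul a (fun q => pd F k q / F q) j) w
  simp only [passThroughInteraction, pd_comp_smul, mul_div_assoc, pd_const_mul] at hratio ⊢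
  rw [hratio]
  calc _ = a ^ 2 * pd (fun q => pd F k q / F q) j (a • w) /
        (a ^ 2 * (pd F j (a • w) / F (a • w)) ^ 2) := by ring
    _ = _ := mul_div_mul_left _ _ (pow_ne_zero 2 ha)

end DemandStatistics

section LogitKernel

variable {J : ℕ} (δ : Fin J → ℝ)

lemma one_add_sum_exp_pos (w : Fin J → ℝ) (u : ℝ) : 0 < 1 + ∑ l, exp (δ l - u * w l) := by
  positivity

lemma Psi_pos (j : Fin J) (u : ℝ) (w : Fin J → ℝ) : 0 < Psi δ j u w :=
  div_pos (exp_pos _) (one_add_sum_exp_pos δ w u)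

lemma Psi_lt_one (j : Fin J) (u : ℝ) (w : Fin J → ℝ) : Psi δ j u w < 1 := by
  rw [Psi, div_lt_one (one_add_sum_exp_pos δ w u)]
  have := Finset.single_le_sum (fun l _ => (exp_pos (δ l - u * w l)).le) (Finset.mem_univ j)
  linarith

lemma Psi_le_exp {j : Fin J} {u a : ℝ} {w : Fin J → ℝ} (hu : 0 ≤ u) (ha : a ≤ w j) :
    Psi δ j u w ≤ exp (δ j) * exp (-(a * u)) := by
  have hden : 1 ≤ 1 + ∑ l, exp (δ l - u * w l) :=
    le_add_of_nonneg_right (Finset.sum_nonneg fun l _ => (exp_pos _).le)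
  calc Psi δ j u w ≤ exp (δ j - u * w j) := div_le_self (exp_pos _).le hden
    _ ≤ exp (δ j + -(a * u)) := exp_le_exp.2 (by nlinarith)
    _ = exp (δ j) * exp (-(a * u)) := exp_add _ _

lemma measurable_Psi (j : Fin J) (w : Fin J → ℝ) : Measurable fun u => Psi δ j u w := by
  unfold Psi; fun_prop

lemma Psi_smul (j : Fin J) (c u : ℝ) (w : Fin J → ℝ) : Psi δ j u (c • w) = Psi δ j (c * u) w := by
  simp only [Psi, Pi.smul_apply, smul_eq_mul, mul_left_comm, mul_assoc]

lemma hasDerivAt_Psi_update (w : Fin J → ℝ) (i j : Fin J) (u t : ℝ) :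
    HasDerivAt (fun t => Psi δ j u (update w i t))
      (u * Psi δ j u (update w i t) * (Psi δ i u (update w i t) - if i = j then 1 else 0)) t := by
  have hcoord (l : Fin J) : HasDerivAt (fun t => δ l - u * update w i t l)
      (if l = i then -u else 0) t := by
    have := ((hasDerivAt_pi.1 (hasDerivAt_update w i t) l).const_mul u).const_sub (δ l)
    simpa [Pi.single_apply, apply_ite] using this
  have hden := (HasDerivAt.fun_sum (u := Finset.univ) fun l _ => (hcoord l).exp).const_add 1
  simp only [mul_ite, mul_zero, Finset.sum_ite_eq', Finset.mem_univ, if_true, update_self] at hden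
  refine ((hcoord j).exp.div hden (one_add_sum_exp_pos δ _ u).ne').congr_deriv ?_
  simp only [Psi, update_self]
  rcases eq_or_ne i j with rfl | hij
  · simp only [if_true]
    field_simp
    ring
  · simp only [hij, hij.symm, if_false]
    field_simp
    ring

end LogitKernel

section GammaIntegral

noncomputable def gammaInt (r c : ℝ) (K : ℝ → ℝ) : ℝ :=
  ∫ u in Ioi 0, u ^ (r - 1) * exp (-(c * u)) * K u

variable {r c : ℝ} {K : ℝ → ℝ}

lemma norm_gammaIntegrand_le {u B : ℝ} (hc : 0 ≤ c) (hu : 0 < u) (hK : |K u| ≤ B) :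
    ‖u ^ (r - 1) * exp (-(c * u)) * K u‖ ≤ u ^ (r - 1) * B := by
  have hexp : exp (-(c * u)) ≤ 1 := exp_le_one_iff.2 (by nlinarith)
  rw [norm_mul, norm_mul, Real.norm_of_nonneg (by positivity), Real.norm_of_nonneg (exp_pos _).le,
    Real.norm_eq_abs, mul_assoc]
  gcongr
  calc exp (-(c * u)) * |K u| ≤ 1 * B := by gcongr
    _ = B := one_mul B

lemma integrableOn_rpow_mul_pow_mul_exp (hr : 0 < r) {a : ℝ} (ha : 0 < a) (C : ℝ) (m : ℕ) :
    IntegrableOn (fun u => u ^ (r - 1) * (C * (u ^ m * exp (-(a * u))))) (Ioi 0) := by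
  have h : IntegrableOn (fun u : ℝ => C * (u ^ (r - 1 + m) * exp (-a * u ^ (1 : ℝ)))) (Ioi 0) :=
    (integrableOn_rpow_mul_exp_neg_mul_rpow (by linarith [m.cast_nonneg (α := ℝ)]) one_pos
      ha).const_mul C
  refine h.congr_fun (fun u (hu : 0 < u) => ?_) measurableSet_Ioi
  simp only [rpow_one, rpow_add hu, rpow_natCast, neg_mul]
  ring

lemma aestronglyMeasurable_gammaIntegrand (hK : Measurable K) :
    AEStronglyMeasurable (fun u => u ^ (r - 1) * exp (-(c * u)) * K u) (volume.restrict (Ioi 0)) :=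
  (by fun_prop : Measurable fun u => u ^ (r - 1) * exp (-(c * u)) * K u).aestronglyMeasurable

variable {C a : ℝ} {m : ℕ}

lemma integrableOn_gammaIntegrand (hr : 0 < r) (hc : 0 ≤ c) (ha : 0 < a) (hK : Measurable K)
    (hb : ∀ u, 0 < u → |K u| ≤ C * (u ^ m * exp (-(a * u)))) :
    IntegrableOn (fun u => u ^ (r - 1) * exp (-(c * u)) * K u) (Ioi 0) :=
  (integrableOn_rpow_mul_pow_mul_exp hr ha C m).mono' (aestronglyMeasurable_gammaIntegrand hK) <|
    (ae_restrict_iff' measurableSet_Ioi).2 <| .of_forall fun u hu =>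
      norm_gammaIntegrand_le hc hu (hb u hu)

lemma gammaInt_neg : gammaInt r c (fun u => -K u) = -gammaInt r c K := by
  simp only [gammaInt, mul_neg, integral_neg]

lemma gammaInt_pos (hr : 0 < r) (hc : 0 ≤ c) (ha : 0 < a) (hK : Measurable K)
    (hb : ∀ u, 0 < u → |K u| ≤ C * (u ^ m * exp (-(a * u)))) (hpos : ∀ u, 0 < u → 0 < K u) :
    0 < gammaInt r c K := by
  have hint := integrableOn_gammaIntegrand hr hc ha hK hb
  refine setIntegral_pos_iff_support_of_nonneg_ae ?_ hint |>.2 ?_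
  · refine (ae_restrict_iff' measurableSet_Ioi).2 (.of_forall fun u (hu : 0 < u) => ?_)
    have := hpos u hu
    positivity
  · have hsub : Ioi (0 : ℝ) ⊆ support (fun u => u ^ (r - 1) * exp (-(c * u)) * K u) ∩ Ioi 0 :=
      fun u (hu : 0 < u) => ⟨(by have := hpos u hu; positivity : (0:ℝ) < _).ne', hu⟩
    exact (by simp : (0 : ENNReal) < volume (Ioi (0 : ℝ))).trans_le (measure_mono hsub)

lemma hasDerivAt_gammaInt (hr : 0 < r) (hc : 0 ≤ c) (ha : 0 < a) {m' : ℕ}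
    {K K' : ℝ → ℝ → ℝ} {t₀ ε : ℝ} (hε : 0 < ε)
    (hK : ∀ t, Measurable (K t)) (hK' : Measurable (K' t₀))
    (hKb : ∀ u, 0 < u → |K t₀ u| ≤ C * (u ^ m * exp (-(a * u))))
    (hK'b : ∀ t ∈ Metric.ball t₀ ε, ∀ u, 0 < u → |K' t u| ≤ C * (u ^ m' * exp (-(a * u))))
    (hderiv : ∀ t ∈ Metric.ball t₀ ε, ∀ u, 0 < u → HasDerivAt (fun s => K s u) (K' t u) t) :
    HasDerivAt (fun t => gammaInt r c (K t)) (gammaInt r c (K' t₀)) t₀ := by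
  refine (hasDerivAt_integral_of_dominated_loc_of_deriv_le
    (F := fun t u => u ^ (r - 1) * exp (-(c * u)) * K t u)
    (F' := fun t u => u ^ (r - 1) * exp (-(c * u)) * K' t u) (Metric.ball_mem_nhds t₀ hε)
    (.of_forall fun t => aestronglyMeasurable_gammaIntegrand (hK t))
    (integrableOn_gammaIntegrand hr hc ha (hK t₀) hKb)
    (aestronglyMeasurable_gammaIntegrand hK')
    ((ae_restrict_iff' measurableSet_Ioi).2 <| .of_forall fun u hu t ht =>
      norm_gammaIntegrand_le hc hu (hK'b t ht u hu))
    (integrableOn_rpow_mul_pow_mul_exp hr ha C m')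
    ((ae_restrict_iff' measurableSet_Ioi).2 <| .of_forall fun u hu t ht =>
      (hderiv t ht u hu).const_mul _)).2

lemma continuousWithinAt_gammaInt (hr : 0 < r) (ha : 0 < a) (hK : Measurable K)
    (hb : ∀ u, 0 < u → |K u| ≤ C * (u ^ m * exp (-(a * u)))) :
    ContinuousWithinAt (fun c => gammaInt r c K) (Ici 0) 0 :=
  continuousWithinAt_of_dominated
    (.of_forall fun c => aestronglyMeasurable_gammaIntegrand hK)
    (eventually_nhdsWithin_of_forall fun c (hc : 0 ≤ c) =>
      (ae_restrict_iff' measurableSet_Ioi).2 <| .of_forall fun u hu =>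
        norm_gammaIntegrand_le hc hu (hb u hu))
    (integrableOn_rpow_mul_pow_mul_exp hr ha C m)
    (.of_forall fun u => by fun_prop)

lemma gammaInt_comp_mul (r c : ℝ) (K : ℝ → ℝ) {s : ℝ} (hs : 0 < s) :
    gammaInt r c K = s ^ r * gammaInt r (c * s) (fun u => K (s * u)) := by
  have h := integral_comp_mul_left_Ioi (fun u => u ^ (r - 1) * exp (-(c * u)) * K u) 0 hs
  have hrescale : ∫ u in Ioi 0, u ^ (r - 1) * exp (-(c * s * u)) * K (s * u) =
      (s ^ (r - 1))⁻¹ * ∫ u in Ioi 0, (s * u) ^ (r - 1) * exp (-(c * (s * u))) * K (s * u) := by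
    rw [← integral_const_mul]
    refine setIntegral_congr_fun measurableSet_Ioi fun u (hu : 0 < u) => ?_
    rw [mul_rpow hs.le hu.le, mul_assoc c]
    field_simp
  rw [gammaInt, gammaInt, hrescale, h, mul_zero, smul_eq_mul, rpow_sub_one hs.ne']
  field_simp

end GammaIntegral

section PsiDominated

variable {J : ℕ} (δ : Fin J → ℝ)

def PsiDominated (j : Fin J) (m : ℕ) (K : (Fin J → ℝ) → ℝ → ℝ) : Prop :=
  ∀ w, Measurable (K w) ∧ ∀ u, 0 < u → |K w u| ≤ u ^ m * Psi δ j u w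

variable {δ} {j : Fin J} {m : ℕ} {K : (Fin J → ℝ) → ℝ → ℝ} {r c : ℝ}

lemma PsiDominated.abs_le_exp (hK : PsiDominated δ j m K) {w : Fin J → ℝ} {a u : ℝ}
    (ha : a ≤ w j) (hu : 0 < u) : |K w u| ≤ exp (δ j) * (u ^ m * exp (-(a * u))) :=
  calc |K w u| ≤ u ^ m * Psi δ j u w := (hK w).2 u hu
    _ ≤ u ^ m * (exp (δ j) * exp (-(a * u))) := by gcongr; exact Psi_le_exp δ hu.le ha
    _ = _ := by ring

lemma half_le_update_of_mem_ball {w : Fin J → ℝ} (hw : 0 < w j) (i : Fin J) {t : ℝ}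
    (ht : t ∈ Metric.ball (w i) (w j / 2)) : w j / 2 ≤ update w i t j := by
  rcases eq_or_ne j i with rfl | hji
  · rw [update_self]
    linarith [(abs_lt.1 (Real.dist_eq t (w j) ▸ Metric.mem_ball.1 ht)).1]
  · rw [update_of_ne hji]
    linarith

lemma PsiDominated.hasDerivAt_gammaInt {m' : ℕ} {K' : (Fin J → ℝ) → ℝ → ℝ}
    (hK : PsiDominated δ j m K) (hK' : PsiDominated δ j m' K') {i : Fin J}
    (hderiv : ∀ w u t, HasDerivAt (fun t => K (update w i t) u) (K' (update w i t) u) t)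
    (hr : 0 < r) (hc : 0 ≤ c) {w : Fin J → ℝ} (hw : 0 < w j) :
    HasDerivAt (fun t => gammaInt r c (K (update w i t))) (gammaInt r c (K' w)) (w i) := by
  have h := _root_.hasDerivAt_gammaInt (K := fun t => K (update w i t))
    (K' := fun t => K' (update w i t)) hr hc (half_pos hw) (half_pos hw)
    (fun t => (hK _).1) (hK' _).1
    (fun u hu => hK.abs_le_exp (by rw [update_eq_self]; linarith) hu)
    (fun t ht u hu => hK'.abs_le_exp (half_le_update_of_mem_ball hw i ht) hu)
    (fun t _ u _ => hderiv w u t)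
  rwa [update_eq_self] at h

lemma PsiDominated.continuousWithinAt_gammaInt (hK : PsiDominated δ j m K) (hr : 0 < r)
    {w : Fin J → ℝ} (hw : 0 < w j) :
    ContinuousWithinAt (fun c => gammaInt r c (K w)) (Ici 0) 0 :=
  _root_.continuousWithinAt_gammaInt hr hw (hK w).1 fun _ hu => hK.abs_le_exp le_rfl hu

end PsiDominated

section LogitKernelDerivatives

variable {J : ℕ} (δ : Fin J → ℝ)

lemma abs_mul_le_of_abs_le_one {x y : ℝ} (hx : 0 ≤ x) (hy : |y| ≤ 1) : |x * y| ≤ x := by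
  rw [abs_mul, abs_of_nonneg hx]
  exact mul_le_of_le_one_right hx hy

noncomputable def psiSelfDeriv (j : Fin J) (w : Fin J → ℝ) (u : ℝ) : ℝ :=
  u * Psi δ j u w * (Psi δ j u w - 1)

noncomputable def psiSelfDeriv2 (j : Fin J) (w : Fin J → ℝ) (u : ℝ) : ℝ :=
  u ^ 2 * Psi δ j u w * (Psi δ j u w - 1) * (2 * Psi δ j u w - 1)

noncomputable def psiCrossDeriv (j k : Fin J) (w : Fin J → ℝ) (u : ℝ) : ℝ :=
  u * Psi δ j u w * Psi δ k u w

noncomputable def psiCrossDeriv2 (j k : Fin J) (w : Fin J → ℝ) (u : ℝ) : ℝ :=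
  u ^ 2 * Psi δ j u w * Psi δ k u w * (2 * Psi δ j u w - 1)

variable {δ} {j k : Fin J} {w : Fin J → ℝ} {u : ℝ}

lemma hasDerivAt_Psi_self (t : ℝ) :
    HasDerivAt (fun t => Psi δ j u (update w j t)) (psiSelfDeriv δ j (update w j t) u) t := by
  simpa [psiSelfDeriv] using hasDerivAt_Psi_update δ w j j u t

lemma hasDerivAt_Psi_cross (hkj : k ≠ j) (t : ℝ) :
    HasDerivAt (fun t => Psi δ j u (update w k t)) (psiCrossDeriv δ j k (update w k t) u) t := by
  simpa [psiCrossDeriv, hkj] using hasDerivAt_Psi_update δ w k j u t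

lemma hasDerivAt_psiSelfDeriv (t : ℝ) :
    HasDerivAt (fun t => psiSelfDeriv δ j (update w j t) u)
      (psiSelfDeriv2 δ j (update w j t) u) t := by
  have hΨ := hasDerivAt_Psi_self (δ := δ) (j := j) (w := w) (u := u) t
  refine ((hΨ.const_mul u).mul (hΨ.sub_const 1)).congr_deriv ?_
  simp only [psiSelfDeriv, psiSelfDeriv2]
  ring

lemma hasDerivAt_psiCrossDeriv (hkj : k ≠ j) (t : ℝ) :
    HasDerivAt (fun t => psiCrossDeriv δ j k (update w j t) u)
      (psiCrossDeriv2 δ j k (update w j t) u) t := by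
  have hΨj := hasDerivAt_Psi_self (δ := δ) (j := j) (w := w) (u := u) t
  have hΨk := hasDerivAt_Psi_cross (δ := δ) (w := w) (u := u) hkj.symm t
  refine ((hΨj.const_mul u).mul hΨk).congr_deriv ?_
  simp only [psiSelfDeriv, psiCrossDeriv, psiCrossDeriv2]
  ring

lemma psiDominated_Psi : PsiDominated δ j 0 fun w u => Psi δ j u w := fun w =>
  ⟨measurable_Psi δ j w, fun u _ => by
    rw [pow_zero, one_mul, abs_of_pos (Psi_pos δ j u w)]⟩

lemma psiDominated_psiSelfDeriv : PsiDominated δ j 1 (psiSelfDeriv δ j) := fun w => by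
  have hΨ := measurable_Psi δ j w
  refine ⟨by unfold psiSelfDeriv; fun_prop, fun u hu => ?_⟩
  have := Psi_pos δ j u w; have := Psi_lt_one δ j u w
  rw [pow_one]
  exact abs_mul_le_of_abs_le_one (by positivity) (abs_le.2 ⟨by linarith, by linarith⟩)

lemma psiDominated_psiSelfDeriv2 : PsiDominated δ j 2 (psiSelfDeriv2 δ j) := fun w => by
  have hΨ := measurable_Psi δ j w
  refine ⟨by unfold psiSelfDeriv2; fun_prop, fun u hu => ?_⟩
  have := Psi_pos δ j u w; have := Psi_lt_one δ j u w
  rw [psiSelfDeriv2, mul_assoc _ (_ - 1)]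
  exact abs_mul_le_of_abs_le_one (by positivity) (abs_le.2 ⟨by nlinarith, by nlinarith⟩)

lemma psiDominated_psiCrossDeriv : PsiDominated δ j 1 (psiCrossDeriv δ j k) := fun w => by
  have hΨj := measurable_Psi δ j w; have hΨk := measurable_Psi δ k w
  refine ⟨by unfold psiCrossDeriv; fun_prop, fun u hu => ?_⟩
  have := Psi_pos δ j u w; have := Psi_pos δ k u w; have := Psi_lt_one δ k u w
  rw [pow_one]
  exact abs_mul_le_of_abs_le_one (by positivity) (abs_le.2 ⟨by linarith, by linarith⟩)

lemma psiDominated_psiCrossDeriv2 : PsiDominated δ j 2 (psiCrossDeriv2 δ j k) := fun w => by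
  have hΨj := measurable_Psi δ j w; have hΨk := measurable_Psi δ k w
  refine ⟨by unfold psiCrossDeriv2; fun_prop, fun u hu => ?_⟩
  have := Psi_pos δ j u w; have := Psi_lt_one δ j u w
  have := Psi_pos δ k u w; have := Psi_lt_one δ k u w
  rw [psiCrossDeriv2, mul_assoc _ (Psi δ k u w)]
  exact abs_mul_le_of_abs_le_one (by positivity) (abs_le.2 ⟨by nlinarith, by nlinarith⟩)

end LogitKernelDerivatives

section ShareIntegral

variable {J : ℕ} (δ : Fin J → ℝ)

/-- At `c = 0` this is the paper's `H_j` (`Hfun`). -/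
noncomputable def shareIntegral (r c : ℝ) (j : Fin J) (w : Fin J → ℝ) : ℝ :=
  gammaInt r c fun u => Psi δ j u w

variable {r c : ℝ} {j k : Fin J} {w : Fin J → ℝ}

lemma shareIntegral_pos (hr : 0 < r) (hc : 0 ≤ c) (hw : 0 < w j) : 0 < shareIntegral δ r c j w :=
  gammaInt_pos hr hc hw ((psiDominated_Psi w).1) (fun _ hu => psiDominated_Psi.abs_le_exp le_rfl hu)
    fun u _ => Psi_pos δ j u w

lemma gammaInt_psiSelfDeriv_neg (hr : 0 < r) (hc : 0 ≤ c) (hw : 0 < w j) :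
    gammaInt r c (psiSelfDeriv δ j w) < 0 := by
  have hpos : 0 < gammaInt r c fun u => -psiSelfDeriv δ j w u :=
    gammaInt_pos hr hc hw (psiDominated_psiSelfDeriv w).1.neg
      (fun _ hu => by rw [abs_neg]; exact psiDominated_psiSelfDeriv.abs_le_exp le_rfl hu)
      fun u hu => by
        have := Psi_pos δ j u w; have := Psi_lt_one δ j u w
        have : 0 < u * Psi δ j u w * (1 - Psi δ j u w) := by positivity
        simp only [psiSelfDeriv]; linarith
  rw [gammaInt_neg] at hpos
  exact neg_pos.1 hpos

lemma hasDerivAt_shareIntegral_self (hr : 0 < r) (hc : 0 ≤ c) (hw : 0 < w j) :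
    HasDerivAt (fun t => shareIntegral δ r c j (update w j t))
      (gammaInt r c (psiSelfDeriv δ j w)) (w j) :=
  psiDominated_Psi.hasDerivAt_gammaInt psiDominated_psiSelfDeriv
    (fun _ _ t => hasDerivAt_Psi_self t) hr hc hw

lemma hasDerivAt_shareIntegral_cross (hkj : k ≠ j) (hr : 0 < r) (hc : 0 ≤ c) (hw : 0 < w j) :
    HasDerivAt (fun t => shareIntegral δ r c j (update w k t))
      (gammaInt r c (psiCrossDeriv δ j k w)) (w k) :=
  psiDominated_Psi.hasDerivAt_gammaInt psiDominated_psiCrossDeriv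
    (fun _ _ t => hasDerivAt_Psi_cross hkj t) hr hc hw

lemma hasDerivAt_gammaInt_psiSelfDeriv (hr : 0 < r) (hc : 0 ≤ c) (hw : 0 < w j) :
    HasDerivAt (fun t => gammaInt r c (psiSelfDeriv δ j (update w j t)))
      (gammaInt r c (psiSelfDeriv2 δ j w)) (w j) :=
  psiDominated_psiSelfDeriv.hasDerivAt_gammaInt psiDominated_psiSelfDeriv2
    (fun _ _ t => hasDerivAt_psiSelfDeriv t) hr hc hw

lemma hasDerivAt_gammaInt_psiCrossDeriv (hkj : k ≠ j) (hr : 0 < r) (hc : 0 ≤ c)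
    (hw : 0 < w j) :
    HasDerivAt (fun t => gammaInt r c (psiCrossDeriv δ j k (update w j t)))
      (gammaInt r c (psiCrossDeriv2 δ j k w)) (w j) :=
  psiDominated_psiCrossDeriv.hasDerivAt_gammaInt psiDominated_psiCrossDeriv2
    (fun _ _ t => hasDerivAt_psiCrossDeriv hkj t) hr hc hw

lemma pd_shareIntegral_self (hr : 0 < r) (hc : 0 ≤ c) (hw : 0 < w j) :
    pd (shareIntegral δ r c j) j w = gammaInt r c (psiSelfDeriv δ j w) :=
  (hasDerivAt_shareIntegral_self δ hr hc hw).deriv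

lemma pd_shareIntegral_cross (hkj : k ≠ j) (hr : 0 < r) (hc : 0 ≤ c) (hw : 0 < w j) :
    pd (shareIntegral δ r c j) k w = gammaInt r c (psiCrossDeriv δ j k w) :=
  (hasDerivAt_shareIntegral_cross δ hkj hr hc hw).deriv

lemma pd_pd_shareIntegral_self (hr : 0 < r) (hc : 0 ≤ c) (hw : 0 < w j) :
    pd (pd (shareIntegral δ r c j) j) j w = gammaInt r c (psiSelfDeriv2 δ j w) := by
  have h : pd (shareIntegral δ r c j) j =ᶠ[nhds w] fun q => gammaInt r c (psiSelfDeriv δ j q) :=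
    (eventually_apply_pos hw).mono fun q hq => pd_shareIntegral_self δ hr hc hq
  rw [pd_congr_of_eventuallyEq h]
  exact (hasDerivAt_gammaInt_psiSelfDeriv δ hr hc hw).deriv

lemma pd_logDeriv_shareIntegral_cross (hkj : k ≠ j) (hr : 0 < r) (hc : 0 ≤ c) (hw : 0 < w j) :
    pd (fun q => pd (shareIntegral δ r c j) k q / shareIntegral δ r c j q) j w =
      (gammaInt r c (psiCrossDeriv2 δ j k w) * shareIntegral δ r c j w -
        gammaInt r c (psiCrossDeriv δ j k w) * gammaInt r c (psiSelfDeriv δ j w)) /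
        shareIntegral δ r c j w ^ 2 := by
  have h : (fun q => pd (shareIntegral δ r c j) k q / shareIntegral δ r c j q) =ᶠ[nhds w]
      fun q => gammaInt r c (psiCrossDeriv δ j k q) / shareIntegral δ r c j q :=
    (eventually_apply_pos hw).mono fun q hq => by
      simp only [pd_shareIntegral_cross δ hkj hr hc hq]
  rw [pd_congr_of_eventuallyEq h]
  have hdiv := (hasDerivAt_gammaInt_psiCrossDeriv δ hkj hr hc hw).div
    (hasDerivAt_shareIntegral_self δ hr hc hw)
    (by rw [update_eq_self]; exact (shareIntegral_pos δ hr hc hw).ne')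
  simp only [update_eq_self] at hdiv
  exact hdiv.deriv

end ShareIntegral

section ShareIntegralStatistics

variable {J : ℕ} (δ : Fin J → ℝ) {r c : ℝ} {j k : Fin J} {w : Fin J → ℝ}

lemma ownCurvature_shareIntegral (hr : 0 < r) (hc : 0 ≤ c) (hw : 0 < w j) :
    ownCurvature (shareIntegral δ r c j) j w =
      shareIntegral δ r c j w * gammaInt r c (psiSelfDeriv2 δ j w) /
        gammaInt r c (psiSelfDeriv δ j w) ^ 2 := by
  rw [ownCurvature, pd_pd_shareIntegral_self δ hr hc hw, pd_shareIntegral_self δ hr hc hw]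

lemma passThroughInteraction_shareIntegral (hkj : k ≠ j) (hr : 0 < r) (hc : 0 ≤ c)
    (hw : 0 < w j) :
    passThroughInteraction (shareIntegral δ r c j) j k w =
      ((gammaInt r c (psiCrossDeriv2 δ j k w) * shareIntegral δ r c j w -
        gammaInt r c (psiCrossDeriv δ j k w) * gammaInt r c (psiSelfDeriv δ j w)) /
          shareIntegral δ r c j w ^ 2) /
        (gammaInt r c (psiSelfDeriv δ j w) / shareIntegral δ r c j w) ^ 2 := by
  rw [passThroughInteraction, pd_logDeriv_shareIntegral_cross δ hkj hr hc hw,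
    pd_shareIntegral_self δ hr hc hw]

lemma continuousWithinAt_ownCurvature_shareIntegral (hr : 0 < r) (hw : 0 < w j) :
    ContinuousWithinAt (fun c => ownCurvature (shareIntegral δ r c j) j w) (Ici 0) 0 := by
  have hS := psiDominated_Psi.continuousWithinAt_gammaInt (δ := δ) hr hw
  have hD1 := psiDominated_psiSelfDeriv.continuousWithinAt_gammaInt (δ := δ) hr hw
  have hD2 := psiDominated_psiSelfDeriv2.continuousWithinAt_gammaInt (δ := δ) hr hw
  have hD1ne := (gammaInt_psiSelfDeriv_neg δ hr le_rfl hw).ne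
  exact ((hS.mul hD2).div (hD1.pow 2) (pow_ne_zero 2 hD1ne)).congr
    (fun c hc => ownCurvature_shareIntegral δ hr hc hw) (ownCurvature_shareIntegral δ hr le_rfl hw)

lemma continuousWithinAt_passThroughInteraction_shareIntegral (hkj : k ≠ j) (hr : 0 < r)
    (hw : 0 < w j) :
    ContinuousWithinAt (fun c => passThroughInteraction (shareIntegral δ r c j) j k w)
      (Ici 0) 0 := by
  have hS := psiDominated_Psi.continuousWithinAt_gammaInt (δ := δ) hr hw
  have hD1 := psiDominated_psiSelfDeriv.continuousWithinAt_gammaInt (δ := δ) hr hw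
  have hX1 := (psiDominated_psiCrossDeriv (k := k)).continuousWithinAt_gammaInt (δ := δ) hr hw
  have hX2 := (psiDominated_psiCrossDeriv2 (k := k)).continuousWithinAt_gammaInt (δ := δ) hr hw
  have hSne := (shareIntegral_pos δ hr le_rfl hw).ne'
  have hD1ne := (gammaInt_psiSelfDeriv_neg δ hr le_rfl hw).ne
  exact ((((hX2.mul hS).sub (hX1.mul hD1)).div (hS.pow 2) (pow_ne_zero 2 hSne)).div
    ((hD1.div hS hSne).pow 2) (pow_ne_zero 2 (div_ne_zero hD1ne hSne))).congr
    (fun c hc => passThroughInteraction_shareIntegral δ hkj hr hc hw)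
    (passThroughInteraction_shareIntegral δ hkj hr le_rfl hw)

end ShareIntegralStatistics

section Demand

variable {J : ℕ} (δ : Fin J → ℝ) {M r β : ℝ} {j k : Fin J}

lemma qG_eq_shareIntegral :
    qG δ M r β j = fun w => M * (β ^ r / Gamma r) * shareIntegral δ r β j w := by
  funext w
  simp only [qG, shareIntegral, gammaInt, ← integral_const_mul]
  congr 1
  funext α
  rw [logitShare, Psi, neg_mul]
  ring

lemma qG_smul (hβ : 0 ≤ β) {l : ℝ} (hl : 0 < l) (w : Fin J → ℝ) :
    qG δ M r β j (l • w) = qG δ M r (β / l) j w := by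
  have hscale := gammaInt_comp_mul r (β / l) (fun u => Psi δ j u w) hl
  rw [div_mul_cancel₀ β hl.ne'] at hscale
  simp only [qG_eq_shareIntegral, shareIntegral, Psi_smul, hscale, div_rpow hβ hl.le]
  field_simp

lemma demandConst_ne_zero (hM : M ≠ 0) (hr : 0 < r) {b : ℝ} (hb : 0 < b) :
    M * (b ^ r / Gamma r) ≠ 0 := by
  have := Gamma_pos_of_pos hr
  have := rpow_pos_of_pos hb r
  positivity

lemma ownCurvature_qG_smul (hM : M ≠ 0) (hr : 0 < r) (hβ : 0 < β) {l : ℝ} (hl : 0 < l)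
    (w : Fin J → ℝ) :
    ownCurvature (qG δ M r β j) j (l • w) = ownCurvature (shareIntegral δ r (β / l) j) j w := by
  rw [← ownCurvature_comp_smul hl.ne', funext (qG_smul δ hβ.le hl), qG_eq_shareIntegral,
    ownCurvature_const_mul (demandConst_ne_zero hM hr (div_pos hβ hl))]

lemma passThroughInteraction_qG_smul (hM : M ≠ 0) (hr : 0 < r) (hβ : 0 < β) {l : ℝ}
    (hl : 0 < l) (w : Fin J → ℝ) :
    passThroughInteraction (qG δ M r β j) j k (l • w) =
      passThroughInteraction (shareIntegral δ r (β / l) j) j k w := by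
  rw [← passThroughInteraction_comp_smul hl.ne', funext (qG_smul δ hβ.le hl),
    qG_eq_shareIntegral, passThroughInteraction_const_mul (demandConst_ne_zero hM hr (div_pos hβ hl))]

end Demand

section MarketCorrection

variable {J : ℕ} (δ : Fin J → ℝ) {r : ℝ} {j k : Fin J} {w : Fin J → ℝ}

lemma Cfun_eq_shareIntegral (hw : 0 < w j) :
    Cfun δ r j w = w j ^ r * exp (-δ j) / Gamma r * shareIntegral δ r 0 j w := by
  have hscale := gammaInt_comp_mul r 1 (fun u => (1 + ∑ l, exp (δ l - w l / w j * u))⁻¹) hw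
  have hkernel : gammaInt r (1 * w j) (fun u => (1 + ∑ l, exp (δ l - w l / w j * (w j * u)))⁻¹) =
      exp (-δ j) * shareIntegral δ r 0 j w := by
    rw [shareIntegral, gammaInt, gammaInt, ← integral_const_mul]
    refine setIntegral_congr_fun measurableSet_Ioi fun u _ => ?_
    have hexp : exp (-(1 * w j * u)) = exp (-δ j) * exp (δ j - u * w j) := by
      rw [← exp_add]; ring_nf
    simp only [Psi, hexp, zero_mul, neg_zero, exp_zero]
    field_simp
  have hCfun : Cfun δ r j w =
      1 / Gamma r * gammaInt r 1 (fun u => (1 + ∑ l, exp (δ l - w l / w j * u))⁻¹) := by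
    simp only [Cfun, gammaInt, one_mul, div_eq_mul_inv]
  rw [hCfun, hscale, hkernel]
  ring

lemma log_Cfun_eq (hr : 0 < r) (hw : 0 < w j) :
    log (Cfun δ r j w) = r * log (w j) + log (shareIntegral δ r 0 j w) - (δ j + log (Gamma r)) := by
  have := Gamma_pos_of_pos hr
  have := shareIntegral_pos δ hr le_rfl hw
  rw [Cfun_eq_shareIntegral δ hw, log_mul (by positivity) (by positivity),
    log_div (by positivity) (by positivity), log_mul (by positivity) (by positivity),
    log_rpow hw, log_exp]
  ring

lemma log_Cfun_eventuallyEq (hr : 0 < r) (hw : 0 < w j) :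
    (fun q => log (Cfun δ r j q)) =ᶠ[nhds w]
      fun q => r * log (q j) + log (shareIntegral δ r 0 j q) - (δ j + log (Gamma r)) :=
  (eventually_apply_pos hw).mono fun _ hq => log_Cfun_eq δ hr hq

lemma pd_logCfun_self (hr : 0 < r) (hw : 0 < w j) :
    pd (fun q => log (Cfun δ r j q)) j w =
      r * (w j)⁻¹ + gammaInt r 0 (psiSelfDeriv δ j w) / shareIntegral δ r 0 j w := by
  have hlogS := (hasDerivAt_shareIntegral_self δ hr le_rfl hw).log
    (by rw [update_eq_self]; exact (shareIntegral_pos δ hr le_rfl hw).ne')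
  rw [update_eq_self] at hlogS
  rw [pd_congr_of_eventuallyEq (log_Cfun_eventuallyEq δ hr hw), pd]
  simp only [update_self]
  exact ((((hasDerivAt_log hw.ne').const_mul r).add hlogS).sub_const _).deriv

lemma pd_logCfun_cross (hkj : k ≠ j) (hr : 0 < r) (hw : 0 < w j) :
    pd (fun q => log (Cfun δ r j q)) k w =
      gammaInt r 0 (psiCrossDeriv δ j k w) / shareIntegral δ r 0 j w := by
  have hlogS := (hasDerivAt_shareIntegral_cross δ hkj hr le_rfl hw).log
    (by rw [update_eq_self]; exact (shareIntegral_pos δ hr le_rfl hw).ne')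
  rw [update_eq_self] at hlogS
  rw [pd_congr_of_eventuallyEq (log_Cfun_eventuallyEq δ hr hw), pd]
  simp only [update_of_ne hkj.symm]
  exact ((hlogS.const_add _).sub_const _).deriv

lemma pd_pd_logCfun_self (hr : 0 < r) (hw : 0 < w j) :
    pd (pd (fun q => log (Cfun δ r j q)) j) j w =
      r * -(w j ^ 2)⁻¹ + (gammaInt r 0 (psiSelfDeriv2 δ j w) * shareIntegral δ r 0 j w -
        gammaInt r 0 (psiSelfDeriv δ j w) * gammaInt r 0 (psiSelfDeriv δ j w)) /
          shareIntegral δ r 0 j w ^ 2 := by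
  have h : pd (fun q => log (Cfun δ r j q)) j =ᶠ[nhds w]
      fun q => r * (q j)⁻¹ + gammaInt r 0 (psiSelfDeriv δ j q) / shareIntegral δ r 0 j q :=
    (eventually_apply_pos hw).mono fun q hq => pd_logCfun_self δ hr hq
  have hratio := (hasDerivAt_gammaInt_psiSelfDeriv δ hr le_rfl hw).div
    (hasDerivAt_shareIntegral_self δ hr le_rfl hw)
    (by rw [update_eq_self]; exact (shareIntegral_pos δ hr le_rfl hw).ne')
  simp only [update_eq_self] at hratio
  rw [pd_congr_of_eventuallyEq h, pd]
  simp only [update_self]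
  exact (((hasDerivAt_inv hw.ne').const_mul r).add hratio).deriv

lemma pd_pd_logCfun_cross (hkj : k ≠ j) (hr : 0 < r) (hw : 0 < w j) :
    pd (pd (fun q => log (Cfun δ r j q)) k) j w =
      pd (fun q => pd (shareIntegral δ r 0 j) k q / shareIntegral δ r 0 j q) j w :=
  pd_congr_of_eventuallyEq ((eventually_apply_pos hw).mono fun q hq => by
    rw [pd_logCfun_cross δ hkj hr hq, pd_shareIntegral_cross δ hkj hr le_rfl hq]) j

end MarketCorrection

section RayLimits

variable {J : ℕ} (δ : Fin J → ℝ) {r : ℝ} {j k : Fin J} {w : Fin J → ℝ}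

lemma one_add_zeta_eq (hr : 0 < r) (hw : 0 < w j) :
    1 + -(w j / r) * pd (fun q => log (Cfun δ r j q)) j w =
      -(w j / r) * (gammaInt r 0 (psiSelfDeriv δ j w) / shareIntegral δ r 0 j w) := by
  rw [pd_logCfun_self δ hr hw]
  field_simp
  ring

lemma chi_zeta_expr_eq_ownCurvature (hr : 0 < r) (hw : 0 < w j) :
    -1 + 1 / r * (1 + w j ^ 2 / r * pd (pd (fun q => log (Cfun δ r j q)) j) j w) /
        (1 + -(w j / r) * pd (fun q => log (Cfun δ r j q)) j w) ^ 2 =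
      -2 + ownCurvature (shareIntegral δ r 0 j) j w := by
  have := (shareIntegral_pos δ hr le_rfl hw).ne'
  have := (gammaInt_psiSelfDeriv_neg δ hr le_rfl hw).ne
  rw [one_add_zeta_eq δ hr hw, pd_pd_logCfun_self δ hr hw,
    ownCurvature_shareIntegral δ hr le_rfl hw]
  field_simp
  ring

lemma xi_zeta_expr_eq_passThroughInteraction (hkj : k ≠ j) (hr : 0 < r) (hw : 0 < w j) :
    1 / r * (w j ^ 2 / r * pd (pd (fun q => log (Cfun δ r j q)) k) j w) /
        (1 + -(w j / r) * pd (fun q => log (Cfun δ r j q)) j w) ^ 2 =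
      passThroughInteraction (shareIntegral δ r 0 j) j k w := by
  have := (gammaInt_psiSelfDeriv_neg δ hr le_rfl hw).ne
  rw [one_add_zeta_eq δ hr hw, pd_pd_logCfun_cross δ hkj hr hw, passThroughInteraction,
    pd_shareIntegral_self δ hr le_rfl hw]
  field_simp

end RayLimits

theorem qG_ray_limits_pass_through_general {J : ℕ} (M : ℝ) (hM : 0 < M)
    (δ : Fin J → ℝ) (r β : ℝ) (hr : 0 < r) (hβ : 0 < β)
    (p : Fin J → ℝ) (hp : ∀ i, 0 < p i) (j k : Fin J) (hkj : k ≠ j) :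
    Tendsto (fun l : ℝ => -2 +
        qG δ M r β j (l • p) * pd (pd (qG δ M r β j) j) j (l • p) /
          (pd (qG δ M r β j) j (l • p)) ^ 2)
      atTop
      (nhds (-1 + 1 / r *
        (1 + p j ^ 2 / r * pd (pd (fun q => Real.log (Cfun δ r j q)) j) j p) /
        (1 + -(p j / r) * pd (fun q => Real.log (Cfun δ r j q)) j p) ^ 2)) ∧
    Tendsto (fun l : ℝ =>
        pd (fun q => pd (qG δ M r β j) k q / qG δ M r β j q) j (l • p) /
          (pd (qG δ M r β j) j (l • p) / qG δ M r β j (l • p)) ^ 2)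
      atTop
      (nhds (1 / r *
        (p j ^ 2 / r * pd (pd (fun q => Real.log (Cfun δ r j q)) k) j p) /
        (1 + -(p j / r) * pd (fun q => Real.log (Cfun δ r j q)) j p) ^ 2)) := by
  have hray : Tendsto (fun l : ℝ => β / l) atTop (nhdsWithin 0 (Ici 0)) :=
    tendsto_nhdsWithin_iff.2 ⟨tendsto_const_nhds.div_atTop tendsto_id,
      (eventually_gt_atTop 0).mono fun l hl => (div_pos hβ hl).le⟩
  rw [chi_zeta_expr_eq_ownCurvature δ hr (hp j),
    xi_zeta_expr_eq_passThroughInteraction δ hkj hr (hp j)]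
  constructor
  · refine (((continuousWithinAt_ownCurvature_shareIntegral δ hr (hp j)).tendsto.comp
      hray).const_add (-2)).congr' ?_
    filter_upwards [eventually_gt_atTop 0] with l hl
    rw [comp_apply, ← ownCurvature_qG_smul δ hM.ne' hr hβ hl]
    rfl
  · refine ((continuousWithinAt_passThroughInteraction_shareIntegral δ hkj hr (hp j)).tendsto.comp
      hray).congr' ?_
    filter_upwards [eventually_gt_atTop 0] with l hl
    rw [comp_apply, ← passThroughInteraction_qG_smul δ hM.ne' hr hβ hl]
    rfl

/-- Ray limits for gamma mixed logit. With
`κ_{jj}^j(p) = q_j ∂²_{p_j p_j} q_j / (∂_{p_j} q_j)²`, `η_{jk} = ∂_{p_k} q_j / q_j`,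
`ζ_j = −(p_j/r) ∂_{p_j} log C_j`, `χ_j = (p_j²/r) ∂²_{p_j p_j} log C_j`, and
`ξ_{jk} = (p_j²/r) ∂²_{p_j p_k} log C_j`, along any ray `p ∈ ℝ_{++}^J`:
`−2 + κ_{jj}^j(λp) → −1 + (1/r)(1 + χ_j(p))/(1 + ζ_j(p))²` and, for `k ≠ j`,
`∂_{p_j} η_{jk}(λp) / η_{jj}(λp)² → (1/r) ξ_{jk}(p)/(1 + ζ_j(p))²`. -/
theorem qG_ray_limits_pass_through {J : ℕ} (hJ : 1 ≤ J) (M : ℝ) (hM : 0 < M)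
    (δ : Fin J → ℝ) (r β : ℝ) (hr : 0 < r) (hβ : 0 < β)
    (p : Fin J → ℝ) (hp : ∀ i, 0 < p i) (j k : Fin J) (hkj : k ≠ j) :
    Tendsto (fun l : ℝ => -2 +
        qG δ M r β j (l • p) * pd (pd (qG δ M r β j) j) j (l • p) /
          (pd (qG δ M r β j) j (l • p)) ^ 2)
      atTop
      (nhds (-1 + 1 / r *
        (1 + p j ^ 2 / r * pd (pd (fun q => Real.log (Cfun δ r j q)) j) j p) /
        (1 + -(p j / r) * pd (fun q => Real.log (Cfun δ r j q)) j p) ^ 2)) ∧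
    Tendsto (fun l : ℝ =>
        pd (fun q => pd (qG δ M r β j) k q / qG δ M r β j q) j (l • p) /
          (pd (qG δ M r β j) j (l • p) / qG δ M r β j (l • p)) ^ 2)
      atTop
      (nhds (1 / r *
        (p j ^ 2 / r * pd (pd (fun q => Real.log (Cfun δ r j q)) k) j p) /
        (1 + -(p j / r) * pd (fun q => Real.log (Cfun δ r j q)) j p) ^ 2)) :=
  qG_ray_limits_pass_through_general M hM δ r β hr hβ p hp j k hkj
end
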